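/- One has dim_F L_i = 1 for every i ≥ 2 (that is, L is a graded Lie algebra of maximal class over F) if and only if d_i = 1 for every i ≥ 2, where d_i = dim_F(C_i ∩ L_1). -/

import Mathlib

open Submodule

/-- The `i`-th two-step centraliser `C_i = {a ∈ M_1 | ⁅a, u⁆ = 0 for all u ∈ M_i}`. -/
def twoStepCentraliser {E : Type*} [Field E] {M : Type*} [LieRing M] [LieAlgebra E M]
    (Mc : ℕ → Submodule E M) (i : ℕ) : Submodule E M where
  carrier := {a : M | a ∈ Mc 1 ∧ ∀ u ∈ Mc i, ⁅a, u⁆ = 0}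
  add_mem' := by
    rintro a b ⟨ha1, ha2⟩ ⟨hb1, hb2⟩
    exact ⟨add_mem ha1 hb1, fun u hu => by rw [add_lie, ha2 u hu, hb2 u hu, add_zero]⟩
  zero_mem' := ⟨zero_mem _, fun u _ => zero_lie u⟩
  smul_mem' := by
    rintro c a ⟨ha1, ha2⟩
    exact ⟨Submodule.smul_mem _ c ha1, fun u hu => by rw [smul_lie, ha2 u hu, smul_zero]⟩

/-- `Mc` is a grading of `M` as a graded Lie algebra of maximal class over `E`,
generated in degree 1. -/
structure IsMaximalClass (E : Type*) [Field E] (M : Type*) [LieRing M] [LieAlgebra E M]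
    (Mc : ℕ → Submodule E M) : Prop where
  zero_bot : Mc 0 = ⊥
  internal : DirectSum.IsInternal Mc
  lie_mem : ∀ i j : ℕ, ∀ x ∈ Mc i, ∀ y ∈ Mc j, ⁅x, y⁆ ∈ Mc (i + j)
  finrank_one : Module.finrank E ↥(Mc 1) = 2
  finrank_eq_one : ∀ i : ℕ, 2 ≤ i → Module.finrank E ↥(Mc i) = 1
  span_succ : ∀ i : ℕ, 1 ≤ i →
    Mc (i + 1) = Submodule.span E {z : M | ∃ v ∈ Mc i, ∃ a ∈ Mc 1, z = ⁅v, a⁆}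

/-- The homogeneous components of the Lie `F`-subalgebra generated by `X` and `Y` in
degree 1:  `L_1 = span_F {X, Y}` and `L_{i+1} = span_F {⁅v, a⁆ : v ∈ L_i, a ∈ L_1}`. -/
def Lcomp (F : Type*) [Field F] {M : Type*} [LieRing M] [Module F M]
    (X Y : M) : ℕ → Submodule F M
  | 0 => ⊥
  | 1 => Submodule.span F {X, Y}
  | (i + 2) => Submodule.span F
      {z : M | ∃ v ∈ Lcomp F X Y (i + 1), ∃ a ∈ Submodule.span F ({X, Y} : Set M), z = ⁅v, a⁆}

/-- `d_i = dim_F (C_i ∩ L_1)`. -/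
noncomputable def dSeq (E : Type*) [Field E] {M : Type*} [LieRing M] [LieAlgebra E M]
    (Mc : ℕ → Submodule E M) (F : Type*) [Field F] [Algebra F E] [LieAlgebra F M]
    [IsScalarTower F E M] (X Y : M) (i : ℕ) : ℕ :=
  Module.finrank F
    ↥(Submodule.restrictScalars F (twoStepCentraliser Mc i) ⊓ Lcomp F X Y 1)

/-!
For `i ≥ 2`, if `L_i = F w` with `w ≠ 0`, then `w ∈ M_i` forces `M_i = E w`, so `C_i ∩ L_1` is
the kernel of `ad w` on `L_1` while `L_{i+1}` is its image. Rank–nullity on the plane `L_1`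
gives `d_i + dim_F L_{i+1} = 2`, and an induction starting from `L_2 = F ⁅X, Y⁆ ≠ 0` yields
both implications.
-/

open Module

theorem Submodule.finrank_map_add_finrank_ker_inf {K V W : Type*} [DivisionRing K]
    [AddCommGroup V] [Module K V] [AddCommGroup W] [Module K W] (f : V →ₗ[K] W)
    (p : Submodule K V) [FiniteDimensional K p] :
    finrank K (p.map f) + finrank K ↥(LinearMap.ker f ⊓ p) = finrank K p := by
  rw [← (f.domRestrict p).finrank_range_add_finrank_ker, LinearMap.range_domRestrict,
    LinearMap.ker_domRestrict, ← finrank_map_subtype_eq, map_comap_subtype, inf_comm]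

theorem lie_add_smul_add_smul {R L : Type*} [CommRing R] [LieRing L] [LieAlgebra R L]
    (X Y : L) (α β γ δ : R) :
    ⁅α • X + β • Y, γ • X + δ • Y⁆ = (α * δ - β * γ) • ⁅X, Y⁆ := by
  simp only [add_lie, lie_add, smul_lie, lie_smul, lie_self, ← lie_skew Y X]
  module

theorem finrank_span_pair_of_linearIndependent {K V : Type*} [DivisionRing K] [AddCommGroup V]
    [Module K V] {X Y : V} (h : LinearIndependent K ![X, Y]) :
    finrank K (span K {X, Y}) = 2 := by
  rw [← Matrix.range_cons_cons_empty, finrank_span_eq_card h, Fintype.card_fin]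

section Lcomp

variable {F M : Type*} [Field F] [LieRing M] [LieAlgebra F M] {X Y : M}

theorem Lcomp_two : Lcomp F X Y 2 = span F {⁅X, Y⁆} := by
  refine le_antisymm (span_le.2 ?_) (span_le.2 ?_)
  · rintro _ ⟨v, hv, a, ha, rfl⟩
    obtain ⟨α, β, rfl⟩ := mem_span_pair.1 hv
    obtain ⟨γ, δ, rfl⟩ := mem_span_pair.1 ha
    rw [lie_add_smul_add_smul]
    exact smul_mem _ _ (mem_span_singleton_self _)
  · rintro _ rfl
    exact subset_span ⟨X, subset_span (by simp), Y, subset_span (by simp), rfl⟩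

theorem Lcomp_succ_eq_map_ad {i : ℕ} (hi : 1 ≤ i) {w : M} (hw : Lcomp F X Y i = span F {w}) :
    Lcomp F X Y (i + 1) = (Lcomp F X Y 1).map (LieAlgebra.ad F M w) := by
  obtain ⟨j, rfl⟩ : ∃ j, i = j + 1 := ⟨i - 1, by omega⟩
  refine le_antisymm (span_le.2 ?_) ?_
  · rintro _ ⟨v, hv, a, ha, rfl⟩
    rw [hw] at hv
    obtain ⟨c, rfl⟩ := mem_span_singleton.1 hv
    exact ⟨c • a, smul_mem _ c ha, (lie_smul c w a).trans (smul_lie c w a).symm⟩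
  · rintro _ ⟨a, ha, rfl⟩
    exact subset_span ⟨w, hw ▸ mem_span_singleton_self w, a, ha, rfl⟩

variable {E : Type*} [Field E] [LieAlgebra E M] [Algebra F E] [IsScalarTower F E M]
  {Mc : ℕ → Submodule E M}

theorem Lcomp_le_restrictScalars
    (hMc : ∀ i j : ℕ, ∀ x ∈ Mc i, ∀ y ∈ Mc j, ⁅x, y⁆ ∈ Mc (i + j))
    (hX : X ∈ Mc 1) (hY : Y ∈ Mc 1) :
    ∀ i, Lcomp F X Y i ≤ (Mc i).restrictScalars F
  | 0 => bot_le
  | 1 => span_le.2 <| by rintro _ (rfl | rfl) <;> assumption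
  | i + 2 => span_le.2 <| by
      rintro _ ⟨v, hv, a, ha, rfl⟩
      exact hMc _ 1 v (Lcomp_le_restrictScalars hMc hX hY (i + 1) hv) a
        (Lcomp_le_restrictScalars hMc hX hY 1 ha)

theorem mem_twoStepCentraliser {i : ℕ} {a : M} :
    a ∈ twoStepCentraliser Mc i ↔ a ∈ Mc 1 ∧ ∀ u ∈ Mc i, ⁅a, u⁆ = 0 :=
  Iff.rfl

theorem mem_twoStepCentraliser_iff_of_eq_span {i : ℕ} {w a : M} (hw : Mc i = span E {w}) :
    a ∈ twoStepCentraliser Mc i ↔ a ∈ Mc 1 ∧ ⁅w, a⁆ = 0 := by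
  refine mem_twoStepCentraliser.trans (and_congr_right fun _ => ?_)
  simp_rw [hw, mem_span_singleton, ← lie_skew w a, neg_eq_zero]
  refine ⟨fun h => h w ⟨1, one_smul E w⟩, ?_⟩
  rintro h _ ⟨c, rfl⟩
  rw [lie_smul, h, smul_zero]

theorem dSeq_add_finrank_Lcomp_succ (hM : IsMaximalClass E M Mc) (hX : X ∈ Mc 1)
    (hY : Y ∈ Mc 1) (hXY : LinearIndependent E ![X, Y]) {i : ℕ} (hi : 2 ≤ i)
    (hL : finrank F (Lcomp F X Y i) = 1) :
    dSeq E Mc F X Y i + finrank F (Lcomp F X Y (i + 1)) = 2 := by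
  obtain ⟨w, hwL, hw0⟩ := exists_mem_ne_zero_of_ne_bot (p := Lcomp F X Y i) fun h => by
    rw [h, finrank_bot] at hL
    omega
  have hLw := eq_span_singleton_of_mem_of_finrank_eq_one hL hwL hw0
  have hMw : Mc i = span E {w} := eq_span_singleton_of_mem_of_finrank_eq_one
    (hM.finrank_eq_one i hi) (Lcomp_le_restrictScalars (F := F) hM.lie_mem hX hY i hwL) hw0
  have hL1 := Lcomp_le_restrictScalars (F := F) hM.lie_mem hX hY 1
  have hCL1 : (twoStepCentraliser Mc i).restrictScalars F ⊓ Lcomp F X Y 1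
      = LinearMap.ker (LieAlgebra.ad F M w) ⊓ Lcomp F X Y 1 := by
    ext a
    simp only [mem_inf, restrictScalars_mem, mem_twoStepCentraliser_iff_of_eq_span hMw,
      LinearMap.mem_ker, LieAlgebra.ad_apply]
    exact ⟨fun h => ⟨h.1.2, h.2⟩, fun h => ⟨⟨hL1 h.2, h.1⟩, h.2⟩⟩
  have hL1rank : finrank F (Lcomp F X Y 1) = 2 :=
    finrank_span_pair_of_linearIndependent (hXY.restrict_scalars' F)
  have : FiniteDimensional F (Lcomp F X Y 1) := .of_finrank_eq_succ hL1rank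
  rw [dSeq, hCL1, Lcomp_succ_eq_map_ad (by omega) hLw, add_comm,
    finrank_map_add_finrank_ker_inf, hL1rank]

theorem IsMaximalClass.eq_span_pair (hM : IsMaximalClass E M Mc) (hX : X ∈ Mc 1)
    (hY : Y ∈ Mc 1) (hXY : LinearIndependent E ![X, Y]) : Mc 1 = span E {X, Y} :=
  have : FiniteDimensional E (Mc 1) := .of_finrank_eq_succ hM.finrank_one
  eq_of_le_of_finrank_eq (span_le.2 <| by rintro _ (rfl | rfl) <;> assumption)
    (by rw [hM.finrank_one, finrank_span_pair_of_linearIndependent hXY]) |>.symm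

theorem IsMaximalClass.lie_ne_zero (hM : IsMaximalClass E M Mc) (hX : X ∈ Mc 1)
    (hY : Y ∈ Mc 1) (hXY : LinearIndependent E ![X, Y]) : ⁅X, Y⁆ ≠ 0 := by
  intro hXY0
  have hM2 : Mc 2 = ⊥ := by
    rw [hM.span_succ 1 le_rfl, span_eq_bot]
    rintro _ ⟨v, hv, a, ha, rfl⟩
    rw [hM.eq_span_pair hX hY hXY] at hv ha
    obtain ⟨α, β, rfl⟩ := mem_span_pair.1 hv
    obtain ⟨γ, δ, rfl⟩ := mem_span_pair.1 ha
    rw [lie_add_smul_add_smul, hXY0, smul_zero]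
  have := hM.finrank_eq_one 2 le_rfl
  rw [hM2, finrank_bot] at this
  omega

end Lcomp

/-- `L` has maximal class over `F` (that is, `dim_F L_i = 1` for every `i ≥ 2`)
if and only if `d_i = 1` for every `i ≥ 2`. -/
theorem stmt_7 (E : Type*) [Field E] (M : Type*) [LieRing M] [LieAlgebra E M]
    (Mc : ℕ → Submodule E M) (hM : IsMaximalClass E M Mc)
    (F : Type*) [Field F] [Algebra F E] [LieAlgebra F M] [IsScalarTower F E M]
    (X Y : M) (hX : X ∈ Mc 1) (hY : Y ∈ Mc 1) (hXY : LinearIndependent E ![X, Y]) :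
    (∀ i : ℕ, 2 ≤ i → Module.finrank F ↥(Lcomp F X Y i) = 1) ↔
      (∀ i : ℕ, 2 ≤ i → dSeq E Mc F X Y i = 1) := by
  have step : ∀ i, 2 ≤ i → finrank F (Lcomp F X Y i) = 1 →
      (dSeq E Mc F X Y i = 1 ↔ finrank F (Lcomp F X Y (i + 1)) = 1) := fun i hi hL => by
    have := dSeq_add_finrank_Lcomp_succ hM hX hY hXY hi hL
    omega
  refine ⟨fun hL i hi => (step i hi (hL i hi)).2 (hL (i + 1) (by omega)), fun hd i hi => ?_⟩
  induction i, hi using Nat.le_induction with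
  | base => rw [Lcomp_two, finrank_span_singleton (hM.lie_ne_zero hX hY hXY)]
  | succ i hi ih => exact (step i hi ih).1 (hd i hi)
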